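/- arXiv:2308.08848 — 2 statements merged into one kernel-verified Lean document; each statement's English description precedes it below -/
import Mathlib

section
/- Let n = d·e be a squarefree positive integer and let t be an integer whose residue class modulo e has multiplicative order d in (ℤ/eℤ)ˣ. For any element (b, a) of G(d,e,t), its conjugacy class equals the set {(t^r·b + s·(1 − t^a), a) : r, s ∈ ℤ}, where the first component is computed in ℤ/eℤ. -/
/-- The units of `ZMod e` act on `Multiplicative (ZMod e)` as (multiplicative) automorphisms. -/
def unitsMulAut (e : ℕ) : (ZMod e)ˣ →* MulAut (Multiplicative (ZMod e)) where
  toFun u := AddEquiv.toMultiplicative (DistribMulAction.toAddAut (ZMod e)ˣ (ZMod e) u)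
  map_one' := by
    ext x
    show Multiplicative.ofAdd ((1 : (ZMod e)ˣ) • x.toAdd) = x
    simp
  map_mul' u v := by
    ext x
    show Multiplicative.ofAdd (((u * v) : (ZMod e)ˣ) • x.toAdd)
      = Multiplicative.ofAdd (u • v • x.toAdd)
    rw [mul_smul]

/-- The homomorphism `Multiplicative (ZMod d) →* (ZMod e)ˣ` sending `a` to `u ^ a`,
well defined since `u ^ d = 1`. -/
def zmodPowHom {e : ℕ} (d : ℕ) (u : (ZMod e)ˣ) (hu : u ^ d = 1) :
    Multiplicative (ZMod d) →* (ZMod e)ˣ :=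
  AddMonoidHom.toMultiplicativeLeft
    (ZMod.lift d ⟨zmultiplesHom (Additive (ZMod e)ˣ) (Additive.ofMul u), by
      simpa [zmultiplesHom, ← ofMul_pow] using congrArg Additive.ofMul hu⟩)

/-- The group `G(d,e,t)` where `u` is the unit of `ZMod e` given by `t` :
the semidirect product `(ℤ/eℤ) ⋊ (ℤ/dℤ)` in which `a ∈ ℤ/dℤ` acts on `ℤ/eℤ` by
`b ↦ t ^ a * b`.  This is the group with presentation
`⟨x, y | x ^ d = 1, y ^ e = 1, x⁻¹ * y * x = y ^ t⟩`, the element `(b, a)`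
corresponding to `x ^ a * y ^ b`. -/
abbrev Gdet (d e : ℕ) (u : (ZMod e)ˣ) (hu : u ^ d = 1) : Type :=
  SemidirectProduct (Multiplicative (ZMod e)) (Multiplicative (ZMod d))
    ((unitsMulAut e).comp (zmodPowHom d u hu))

/-! Since `ℤ/dℤ` is abelian, conjugating `(b, a)` by `(s, r)` leaves `a` unchanged and sends `b`
to `s + t ^ r * b - t ^ a * s`. Every element of `G(d,e,t)` is `(s, r)` for some integers `r, s`,
so these are all the conjugates. -/

namespace SemidirectProduct

variable {N G : Type*} [Group N] [CommGroup G] {φ : G →* MulAut N}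

theorem mul_mk_mul_inv_of_comm (x : N ⋊[φ] G) (n : N) (g : G) :
    x * ⟨n, g⟩ * x⁻¹ = ⟨x.left * φ x.right n * φ g x.left⁻¹, g⟩ := by
  ext <;> simp [mul_comm x.right g]

end SemidirectProduct

open Multiplicative

section Gdet

variable {d e : ℕ} {u : (ZMod e)ˣ} (hu : u ^ d = 1)

theorem zmodPowHom_ofAdd_intCast (r : ℤ) : zmodPowHom d u hu (ofAdd (r : ZMod d)) = u ^ r := by
  show Additive.toMul (ZMod.lift d _ (r : ZMod d)) = u ^ r
  rw [ZMod.lift_coe]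
  simp [zmultiplesHom]

theorem zmodPowHom_ofAdd_natCast (a : ℕ) : zmodPowHom d u hu (ofAdd (a : ZMod d)) = u ^ a := by
  simpa using zmodPowHom_ofAdd_intCast hu a

theorem unitsMulAut_comp_zmodPowHom_apply (k : Multiplicative (ZMod d)) (c : ZMod e) :
    (unitsMulAut e).comp (zmodPowHom d u hu) k (ofAdd c)
      = ofAdd (((zmodPowHom d u hu k : (ZMod e)ˣ) : ZMod e) * c) :=
  rfl

theorem Gdet.exists_eq_mk_intCast (x : Gdet d e u hu) :
    ∃ r s : ℤ, x = ⟨ofAdd (s : ZMod e), ofAdd (r : ZMod d)⟩ := by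
  obtain ⟨r, hr⟩ := ZMod.intCast_surjective (toAdd x.right)
  obtain ⟨s, hs⟩ := ZMod.intCast_surjective (toAdd x.left)
  exact ⟨r, s, SemidirectProduct.ext (by simp [hs]) (by simp [hr])⟩

theorem Gdet.mk_mul_mk_mul_inv (r s : ℤ) (b : ZMod e) (a : ℕ) :
    (⟨ofAdd (s : ZMod e), ofAdd (r : ZMod d)⟩ : Gdet d e u hu) * ⟨ofAdd b, ofAdd (a : ZMod d)⟩ *
        (⟨ofAdd (s : ZMod e), ofAdd (r : ZMod d)⟩ : Gdet d e u hu)⁻¹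
      = ⟨ofAdd (((u ^ r : (ZMod e)ˣ) : ZMod e) * b + s * (1 - (u : ZMod e) ^ a)),
          ofAdd (a : ZMod d)⟩ := by
  rw [SemidirectProduct.mul_mk_mul_inv_of_comm]
  dsimp only
  rw [← ofAdd_neg, unitsMulAut_comp_zmodPowHom_apply, unitsMulAut_comp_zmodPowHom_apply, zmodPowHom_ofAdd_intCast,
    zmodPowHom_ofAdd_natCast, Units.val_pow_eq_pow_val]
  congr 1
  show ofAdd ((s : ZMod e) + (u ^ r : (ZMod e)ˣ) * b + (u : ZMod e) ^ a * -(s : ZMod e)) = _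
  congr 1
  ring

end Gdet

/-- **Description of the conjugacy class of `(b, a)`.**
Let `n = d * e` be squarefree and `t` an integer whose residue class mod `e` has
multiplicative order `d` in `(ℤ/eℤ)ˣ`.  The conjugacy class of the element `(b, a)`
of `G(d,e,t)` is exactly the set `{(t^r * b + s * (1 - t^a), a) : r, s ∈ ℤ}`,
the first component computed in `ℤ/eℤ`. -/
theorem conjugatesOf_eq (d e : ℕ) (t : ℤ) (u : (ZMod e)ˣ)
    (hu : (u : ZMod e) = (t : ZMod e)) (hord : orderOf u = d)
    (b : ZMod e) (a : ℕ) :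
    conjugatesOf
        (⟨Multiplicative.ofAdd b, Multiplicative.ofAdd (a : ZMod d)⟩ :
          Gdet d e u (by rw [← hord]; exact pow_orderOf_eq_one u))
      = {x | ∃ r s : ℤ,
          x = ⟨Multiplicative.ofAdd (((u ^ r : (ZMod e)ˣ) : ZMod e) * b
                  + (s : ZMod e) * (1 - (t : ZMod e) ^ a)),
               Multiplicative.ofAdd (a : ZMod d)⟩} := by
  ext x
  simp only [conjugatesOf, Set.mem_ofPred_eq, isConj_iff, ← hu]
  constructor
  · rintro ⟨z, rfl⟩
    obtain ⟨r, s, rfl⟩ := Gdet.exists_eq_mk_intCast _ z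
    exact ⟨r, s, Gdet.mk_mul_mk_mul_inv _ r s b a⟩
  · rintro ⟨r, s, rfl⟩
    exact ⟨_, Gdet.mk_mul_mk_mul_inv _ r s b a⟩
end

section
/- Let p < q < r be primes with p dividing q − 1, and let t be an integer whose residue class modulo qr is a unit of multiplicative order p, with t of order p modulo q and t ≡ 1 modulo r. Then the group G(p, qr, t) has exactly p·r + r·(q − 1)/p conjugacy classes. -/
open MulAction

theorem card_conjClasses_eq_of_isConj_iff {G T : Type*} [Monoid G] (f : G → T)
    (hf : Function.Surjective f) (h : ∀ g g', IsConj g g' ↔ f g = f g') :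
    Nat.card (ConjClasses G) = Nat.card T :=
  Nat.card_congr <| (Quotient.congrRight h).trans (Setoid.quotientKerEquivOfSurjective f hf)

theorem card_orbitRel_quotient_units {F : Type*} [Field F] [Finite F] (H : Subgroup Fˣ) :
    Nat.card (orbitRel.Quotient H F) = (Nat.card F - 1) / Nat.card H + 1 := by
  classical
  have : Fintype F := Fintype.ofFinite F
  have hfix : ∀ h : H, h ≠ 1 → Fintype.card (fixedBy F h) = 1 := by
    intro h hh
    have : fixedBy F h = {0} := by
      ext x
      rw [mem_fixedBy, Set.mem_singleton_iff, Subgroup.smul_def, Units.smul_def, smul_eq_mul,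
        ← sub_eq_zero, ← sub_one_mul, mul_eq_zero, sub_eq_zero, or_iff_right]
      exact fun h1 => hh (Subtype.ext (Units.ext h1))
    simp [this]
  have burnside := sum_card_fixedBy_eq_card_orbits_mul_card_group H F
  rw [Fintype.sum_eq_add_sum_compl 1, Finset.sum_congr rfl fun h hh =>
    hfix h (Finset.mem_compl.mp hh |>.imp Finset.mem_singleton.mpr)] at burnside
  simp only [fixedBy_one_eq_univ, Fintype.card_setUniv, Finset.sum_const, Finset.card_compl,
    Finset.card_singleton, smul_eq_mul, mul_one] at burnside
  simp only [Fintype.card_eq_nat_card] at burnside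
  change _ = Nat.card (orbitRel.Quotient H F) * _ at burnside
  have hH : 0 < Nat.card H := Nat.card_pos
  have hF : 0 < Nat.card F := Nat.card_pos
  rw [← Nat.add_div_right _ hH, eq_comm]
  exact Nat.div_eq_of_eq_mul_left hH (by omega)

section Gdet

variable {d e : ℕ} {u : (ZMod e)ˣ} {hu : u ^ d = 1}

theorem zmodPowHom_intCast (k : ℤ) :
    zmodPowHom d u hu (.ofAdd (k : ZMod d)) = u ^ k := by
  simp [zmodPowHom, zmultiplesHom]

theorem zmodPowHom_eq_pow [NeZero d] (a : Multiplicative (ZMod d)) :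
    zmodPowHom d u hu a = u ^ a.toAdd.val := by
  rw [← zpow_natCast, ← zmodPowHom_intCast (d := d), Int.cast_natCast, ZMod.natCast_zmod_val]
  rfl

theorem range_zmodPowHom : (zmodPowHom d u hu).range = Subgroup.zpowers u := by
  refine le_antisymm ?_ (Subgroup.zpowers_le.mpr ⟨Multiplicative.ofAdd ((1 : ℤ) : ZMod d), ?_⟩)
  · rintro _ ⟨a, rfl⟩
    obtain ⟨k, rfl⟩ := ZMod.intCast_surjective a.toAdd
    exact zmodPowHom_intCast (hu := hu) k ▸ Subgroup.zpow_mem_zpowers u k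
  · rw [zmodPowHom_intCast, zpow_one]

theorem zmodPowHom_injective (h : orderOf u = d) : Function.Injective (zmodPowHom d u hu) := by
  have : NeZero d := ⟨h ▸ (orderOf_pos u).ne'⟩
  refine (injective_iff_map_eq_one _).mpr fun a ha => ?_
  by_contra ha1
  refine pow_ne_one_of_lt_orderOf ?_ (h ▸ ZMod.val_lt a.toAdd) (zmodPowHom_eq_pow a ▸ ha)
  exact (ZMod.val_ne_zero _).mpr ha1

theorem Gdet.mul_left_toAdd (g g' : Gdet d e u hu) :
    (g * g').left.toAdd = g.left.toAdd + zmodPowHom d u hu g.right * g'.left.toAdd :=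
  rfl

theorem Gdet.isConj_iff {g g' : Gdet d e u hu} :
    IsConj g g' ↔ g.right = g'.right ∧ ∃ (s : Multiplicative (ZMod d)) (c : ZMod e),
      g'.left.toAdd = zmodPowHom d u hu s * g.left.toAdd + (1 - zmodPowHom d u hu g.right) * c := by
  simp_rw [_root_.isConj_iff, mul_inv_eq_iff_eq_mul]
  constructor
  · rintro ⟨k, hk⟩
    have hright : g.right = g'.right := by
      simpa [mul_comm] using congrArg SemidirectProduct.right hk
    refine ⟨hright, k.right, k.left.toAdd, ?_⟩
    have hleft := congrArg (fun x => x.left.toAdd) hk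
    simp only [Gdet.mul_left_toAdd, ← hright] at hleft
    linear_combination -hleft
  · rintro ⟨hright, s, c, hleft⟩
    refine ⟨⟨Multiplicative.ofAdd c, s⟩, SemidirectProduct.ext ?_ ?_⟩
    · apply Multiplicative.toAdd.injective
      simp only [Gdet.mul_left_toAdd, hleft, ← hright, toAdd_ofAdd]
      ring
    · simp [mul_comm, hright]

end Gdet

section ConditionA

variable {p q r : ℕ} (hqr : q.Coprime r) {u : (ZMod (q * r))ˣ} {hu : u ^ p = 1}
  {uq : (ZMod q)ˣ}

local notation "π" => ZMod.chineseRemainder hqr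

theorem chineseRemainder_zmodPowHom [NeZero p] {huq : uq ^ p = 1}
    (hπ : π (u : ZMod (q * r)) = ((uq : ZMod q), (1 : ZMod r))) (s : Multiplicative (ZMod p)) :
    π (zmodPowHom p u hu s : ZMod (q * r)) = ((zmodPowHom p uq huq s : ZMod q), (1 : ZMod r)) := by
  rw [zmodPowHom_eq_pow, zmodPowHom_eq_pow, Units.val_pow_eq_pow_val, map_pow, hπ, Prod.pow_mk,
    one_pow, Units.val_pow_eq_pow_val]

theorem exists_conj_iff_of_ne_one [NeZero p] [Fact q.Prime]
    (hπ : π (u : ZMod (q * r)) = ((uq : ZMod q), (1 : ZMod r))) (hordq : orderOf uq = p)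
    {a : Multiplicative (ZMod p)} (ha : a ≠ 1) {b b' : ZMod (q * r)} :
    (∃ (s : Multiplicative (ZMod p)) (c : ZMod (q * r)),
      b' = zmodPowHom p u hu s * b + (1 - zmodPowHom p u hu a) * c) ↔ (π b).2 = (π b').2 := by
  have huq : uq ^ p = 1 := hordq ▸ pow_orderOf_eq_one uq
  have hπs := chineseRemainder_zmodPowHom hqr (hu := hu) (huq := huq) hπ
  constructor
  · rintro ⟨s, c, rfl⟩
    simp [hπs]
  · intro h
    have hw : (1 - zmodPowHom p uq huq a : ZMod q) ≠ 0 := by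
      have := (zmodPowHom_injective (hu := huq) hordq).ne ha
      rw [map_one] at this
      rwa [sub_ne_zero, ne_comm, Ne, Units.val_eq_one]
    refine ⟨1, (π).symm ((1 - zmodPowHom p uq huq a : ZMod q)⁻¹ * ((π b').1 - (π b).1), 0),
      (π).injective (Prod.ext ?_ ?_)⟩
    · simp [hπs, mul_inv_cancel_left₀ hw]
    · simp [hπs, h]

theorem exists_conj_iff_of_one [NeZero p] {huq : uq ^ p = 1}
    (hπ : π (u : ZMod (q * r)) = ((uq : ZMod q), (1 : ZMod r))) {b b' : ZMod (q * r)} :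
    (∃ s : Multiplicative (ZMod p), b' = zmodPowHom p u hu s * b) ↔
      (Quotient.mk _ (π b).1 : orbitRel.Quotient (Subgroup.zpowers uq) (ZMod q)) =
        Quotient.mk _ (π b').1 ∧ (π b).2 = (π b').2 := by
  have hπs := chineseRemainder_zmodPowHom hqr (hu := hu) (huq := huq) hπ
  rw [eq_comm, Quotient.eq, orbitRel_apply, mem_orbit_iff, ← range_zmodPowHom (hu := huq)]
  constructor
  · rintro ⟨s, rfl⟩
    exact ⟨⟨⟨_, s, rfl⟩, by simp [hπs, Subgroup.smul_def, Units.smul_def]⟩, by simp [hπs]⟩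
  · rintro ⟨⟨⟨_, s, rfl⟩, hs⟩, h⟩
    refine ⟨s, (π).injective (Prod.ext ?_ ?_)⟩
    · simpa [hπs, Subgroup.smul_def, Units.smul_def] using hs.symm
    · simp [hπs, h]

def conjInvariant (H : Subgroup (ZMod q)ˣ) (g : Gdet p (q * r) u hu) :
    {a : Multiplicative (ZMod p) // a ≠ 1} × ZMod r ⊕ orbitRel.Quotient H (ZMod q) × ZMod r :=
  if h : g.right = 1 then .inr (Quotient.mk _ (π g.left.toAdd).1, (π g.left.toAdd).2)
  else .inl (⟨g.right, h⟩, (π g.left.toAdd).2)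

theorem isConj_iff_conjInvariant_eq [NeZero p] [Fact q.Prime]
    (hπ : π (u : ZMod (q * r)) = ((uq : ZMod q), (1 : ZMod r))) (hordq : orderOf uq = p)
    (g g' : Gdet p (q * r) u hu) :
    IsConj g g' ↔
      conjInvariant hqr (Subgroup.zpowers uq) g = conjInvariant hqr (Subgroup.zpowers uq) g' := by
  have huq : uq ^ p = 1 := hordq ▸ pow_orderOf_eq_one uq
  rw [Gdet.isConj_iff]
  unfold conjInvariant
  by_cases h : g.right = 1 <;> by_cases h' : g'.right = 1
  · simp only [h, h', dif_pos, map_one, Units.val_one, sub_self, zero_mul, add_zero, true_and,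
      exists_const, Sum.inr.injEq, Prod.mk.injEq]
    exact exists_conj_iff_of_one hqr (huq := huq) hπ
  · simp [h, h', Ne.symm h']
  · simp [h, h']
  · simp only [h, h', dif_neg, not_false_eq_true, Sum.inl.injEq, Prod.mk.injEq, Subtype.mk.injEq]
    exact and_congr_right fun _ => exists_conj_iff_of_ne_one hqr hπ hordq h

theorem conjInvariant_surjective (H : Subgroup (ZMod q)ˣ) :
    Function.Surjective (conjInvariant (u := u) (hu := hu) hqr H) := by
  rintro (⟨⟨a, ha⟩, y⟩ | ⟨ω, y⟩)
  · exact ⟨⟨.ofAdd ((π).symm (0, y)), a⟩, by simp [conjInvariant, ha]⟩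
  · obtain ⟨x, rfl⟩ := Quotient.mk_surjective ω
    exact ⟨⟨.ofAdd ((π).symm (x, y)), 1⟩, by simp [conjInvariant]⟩

end ConditionA

/-- **Class number of groups of order `pqr` with `d = p` (condition A).**
Let `p < q < r` be primes with `p ∣ q - 1`, and let `t` be an integer whose residue
class modulo `q * r` is a unit of multiplicative order `p`, with `t` of order `p`
modulo `q` and `t ≡ 1` modulo `r`.  Then `G(p, qr, t)` has exactly
`p * r + r * (q - 1) / p` conjugacy classes. -/
theorem classNumber_pqr_condA (p q r : ℕ) (hq : q.Prime) (hr : r.Prime)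
    (hqr : q < r) (t : ℤ)
    (u : (ZMod (q * r))ˣ) (hu : (u : ZMod (q * r)) = (t : ZMod (q * r)))
    (hord : orderOf u = p)
    (uq : (ZMod q)ˣ) (huq : (uq : ZMod q) = (t : ZMod q)) (hordq : orderOf uq = p)
    (hr1 : (t : ZMod r) = 1) :
    Nat.card (ConjClasses
        (Gdet p (q * r) u (by rw [← hord]; exact pow_orderOf_eq_one u)))
      = p * r + r * ((q - 1) / p) := by
  have : Fact q.Prime := ⟨hq⟩
  have hp : 0 < p := hordq ▸ orderOf_pos uq
  have : NeZero p := ⟨hp.ne'⟩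
  have : NeZero r := ⟨hr.ne_zero⟩
  have hcop : q.Coprime r := (Nat.coprime_primes hq hr).mpr hqr.ne
  have hπ : ZMod.chineseRemainder hcop (u : ZMod (q * r)) = ((uq : ZMod q), (1 : ZMod r)) := by
    rw [hu, map_intCast]
    ext <;> simp [huq, hr1]
  rw [card_conjClasses_eq_of_isConj_iff _ (conjInvariant_surjective hcop _)
      (isConj_iff_conjInvariant_eq hcop hπ hordq),
    Nat.card_sum, Nat.card_prod, Nat.card_prod, card_orbitRel_quotient_units, Nat.card_zpowers,
    hordq, Nat.card_zmod, Nat.card_zmod]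
  have hcard : Nat.card {a : Multiplicative (ZMod p) // a ≠ 1} = p - 1 := by
    simp [Nat.card_eq_fintype_card, Fintype.card_subtype_compl]
  rw [hcard]
  obtain ⟨p, rfl⟩ := Nat.exists_eq_add_one_of_ne_zero hp.ne'
  simp only [Nat.add_sub_cancel]
  ring
end
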